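/- Let G be a locally compact second-countable Hausdorff group with strongly continuous unitary representations U_S on H_S and U_R on H_R, and E a right-covariant POVM on G with values in B(H_R). Then the relative-state assignment is invariant on orbits of the diagonal G-action: for every state ρ on H_S, state ω on H_R, and h ∈ G, (h.ρ)^{(h.ω)} = ρ^{(ω)}. -/

import Mathlib

open MeasureTheory ContinuousLinearMap
open scoped ENNReal

noncomputable section

namespace QRF

variable (H : Type*) [NormedAddCommGroup H] [InnerProductSpace ℂ H] [CompleteSpace H]

/-- The index set of an arbitrarily chosen Hilbert basis of `H`. -/
def hbIdx : Set H := (exists_hilbertBasis ℂ H).choose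

/-- An arbitrarily chosen Hilbert basis of `H`. -/
def hb : HilbertBasis (hbIdx H) ℂ H := (exists_hilbertBasis ℂ H).choose_spec.choose

variable {H}

/-- The trace of an operator, computed along the chosen Hilbert basis.  (It is
basis-independent, and finite, on trace-class operators.) -/
def trace (T : H →L[ℂ] H) : ℂ := ∑' i : hbIdx H, (inner ℂ (hb H i) (T (hb H i)) : ℂ)

/-- A positive trace-class operator: positive with summable diagonal (for positive
operators this is basis-independent). -/
def IsPositiveTraceClass (T : H →L[ℂ] H) : Prop :=
  T.IsPositive ∧ Summable fun i : hbIdx H => ((inner ℂ (hb H i) (T (hb H i)) : ℂ)).re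

/-- A state: a positive trace-class operator of trace one. -/
def IsState (T : H →L[ℂ] H) : Prop := IsPositiveTraceClass T ∧ trace T = 1

/-- A trace-class operator: a linear combination of four positive trace-class operators. -/
def IsTraceClass (T : H →L[ℂ] H) : Prop :=
  ∃ A B C D : H →L[ℂ] H, IsPositiveTraceClass A ∧ IsPositiveTraceClass B ∧
    IsPositiveTraceClass C ∧ IsPositiveTraceClass D ∧ T = A - B + Complex.I • (C - D)

variable {Ω Ω' : Type*} [MeasurableSpace Ω] [MeasurableSpace Ω']

/-- A POVM on a measurable space `Ω` with values in `B(H)`: effects, normalized, and each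
state induces a countably additive Born probability measure. -/
def IsPOVM (E : Set Ω → (H →L[ℂ] H)) : Prop :=
  (∀ X : Set Ω, MeasurableSet X → (E X).IsPositive ∧ (1 - E X).IsPositive) ∧
  E Set.univ = 1 ∧
  ∀ ω : H →L[ℂ] H, IsState ω → ∃ μ : Measure Ω, IsProbabilityMeasure μ ∧
    ∀ X : Set Ω, MeasurableSet X → (μ X).toReal = (trace (ω ∘L E X)).re

/-- A POVM "on a subset `S`" of `Ω`: normalized on `S` and concentrated there. -/
def IsPOVMOn (S : Set Ω) (E : Set Ω → (H →L[ℂ] H)) : Prop :=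
  (∀ X : Set Ω, MeasurableSet X → (E X).IsPositive ∧ (1 - E X).IsPositive) ∧
  E S = 1 ∧ (∀ X : Set Ω, MeasurableSet X → E X = E (X ∩ S)) ∧
  ∀ ω : H →L[ℂ] H, IsState ω → ∃ μ : Measure Ω, IsProbabilityMeasure μ ∧
    ∀ X : Set Ω, MeasurableSet X → (μ X).toReal = (trace (ω ∘L E X)).re

open Classical in
/-- The Born probability measure `μ^E_ω : X ↦ tr(ω E(X))` of a state `ω` for a POVM `E`. -/
def bornMeasure (E : Set Ω → (H →L[ℂ] H)) (ω : H →L[ℂ] H) : Measure Ω :=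
  if h : ∃ μ : Measure Ω, IsProbabilityMeasure μ ∧
      ∀ X : Set Ω, MeasurableSet X → (μ X).toReal = (trace (ω ∘L E X)).re
  then h.choose else 0

variable {HS HR HR' HT HT' : Type*}
  [NormedAddCommGroup HS] [InnerProductSpace ℂ HS] [CompleteSpace HS]
  [NormedAddCommGroup HR] [InnerProductSpace ℂ HR] [CompleteSpace HR]
  [NormedAddCommGroup HR'] [InnerProductSpace ℂ HR'] [CompleteSpace HR']
  [NormedAddCommGroup HT] [InnerProductSpace ℂ HT] [CompleteSpace HT]
  [NormedAddCommGroup HT'] [InnerProductSpace ℂ HT'] [CompleteSpace HT']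

/-- A realization of the Hilbert tensor product of `HS` and `HR` as `HT`: a bilinear map
whose image has dense span and which multiplies inner products. -/
structure HilbertTensor (HS HR HT : Type*)
    [NormedAddCommGroup HS] [InnerProductSpace ℂ HS]
    [NormedAddCommGroup HR] [InnerProductSpace ℂ HR]
    [NormedAddCommGroup HT] [InnerProductSpace ℂ HT] where
  tmul : HS → HR → HT
  add_left : ∀ a a' b, tmul (a + a') b = tmul a b + tmul a' b
  add_right : ∀ a b b', tmul a (b + b') = tmul a b + tmul a b'
  smul_left : ∀ (c : ℂ) a b, tmul (c • a) b = c • tmul a b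
  smul_right : ∀ (c : ℂ) a b, tmul a (c • b) = c • tmul a b
  inner_tmul : ∀ a b c d,
    (inner ℂ (tmul a b) (tmul c d) : ℂ) = (inner ℂ a c : ℂ) * (inner ℂ b d : ℂ)
  dense_span : Dense
    ((Submodule.span ℂ (Set.range fun p : HS × HR => tmul p.1 p.2) : Submodule ℂ HT) : Set HT)

/-- `C = A ⊗ B` with respect to a tensor-product realization: `C` acts factor-wise on
elementary tensors (this determines `C` uniquely, by density and boundedness). -/
def HilbertTensor.IsTensorOp
    {HS HR HT : Type*}
    [NormedAddCommGroup HS] [InnerProductSpace ℂ HS]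
    [NormedAddCommGroup HR] [InnerProductSpace ℂ HR]
    [NormedAddCommGroup HT] [InnerProductSpace ℂ HT]
    (tm : HilbertTensor HS HR HT)
    (A : HS →L[ℂ] HS) (B : HR →L[ℂ] HR) (C : HT →L[ℂ] HT) : Prop :=
  ∀ a b, C (tm.tmul a b) = tm.tmul (A a) (B b)

/-- `A = ∫_Ω f ⊗ dE`: the defining property of the operator-valued integral, via expectation
values on product states. -/
def IsOVIntegral (tm : HilbertTensor HS HR HT) (f : Ω → HS →L[ℂ] HS)
    (E : Set Ω → (HR →L[ℂ] HR)) (A : HT →L[ℂ] HT) : Prop :=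
  ∀ ρ ω ρω, IsState ρ → IsState ω → tm.IsTensorOp ρ ω ρω →
    trace (ρω ∘L A) = ∫ x, trace (ρ ∘L f x) ∂(bornMeasure E ω)

/-- `A = ∫_S f ⊗ dE`: operator-valued integral over a subset `S` of `Ω`. -/
def IsOVIntegralOn (S : Set Ω) (tm : HilbertTensor HS HR HT) (f : Ω → HS →L[ℂ] HS)
    (E : Set Ω → (HR →L[ℂ] HR)) (A : HT →L[ℂ] HT) : Prop :=
  ∀ ρ ω ρω, IsState ρ → IsState ω → tm.IsTensorOp ρ ω ρω →
    trace (ρω ∘L A) = ∫ x in S, trace (ρ ∘L f x) ∂(bornMeasure E ω)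

/-- An ultraweakly continuous and bounded operator-valued function. -/
def UWContinuousBounded [TopologicalSpace Ω] (f : Ω → HS →L[ℂ] HS) : Prop :=
  (∀ ρ : HS →L[ℂ] HS, IsTraceClass ρ → Continuous fun x => trace (ρ ∘L f x)) ∧
  ∃ C : ℝ, ∀ x, ‖f x‖ ≤ C

/-- Ultraweak continuity/boundedness on a subset. -/
def UWContinuousBoundedOn [TopologicalSpace Ω] (f : Ω → HS →L[ℂ] HS) (S : Set Ω) : Prop :=
  (∀ ρ : HS →L[ℂ] HS, IsTraceClass ρ → ContinuousOn (fun x => trace (ρ ∘L f x)) S) ∧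
  ∃ C : ℝ, ∀ x ∈ S, ‖f x‖ ≤ C

variable {G : Type*} [Group G] [TopologicalSpace G]

/-- A strongly continuous unitary representation of a topological group. -/
def IsUnitaryRep (U : G → H →L[ℂ] H) : Prop :=
  U 1 = 1 ∧ (∀ g h : G, U (g * h) = U g ∘L U h) ∧
  (∀ g : G, adjoint (U g) = U g⁻¹) ∧ ∀ x : H, Continuous fun g : G => U g x

/-- The right action `A.g := U(g)* A U(g)` of `G` on operators. -/
def opAct (U : G → H →L[ℂ] H) (g : G) (A : H →L[ℂ] H) : H →L[ℂ] H :=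
  adjoint (U g) ∘L A ∘L U g

/-- The left action `g.ρ := U(g) ρ U(g)*` of `G` on states. -/
def stateAct (U : G → H →L[ℂ] H) (g : G) (ρ : H →L[ℂ] H) : H →L[ℂ] H :=
  U g ∘L ρ ∘L adjoint (U g)

/-- Right covariance of a POVM on a group: `E(X·g) = U(g)* E(X) U(g)`. -/
def RightCovariant [MeasurableSpace G] (U : G → H →L[ℂ] H) (E : Set G → (H →L[ℂ] H)) : Prop :=
  ∀ X : Set G, MeasurableSet X → ∀ g : G,
    E ((fun x => x * g) '' X) = adjoint (U g) ∘L E X ∘L U g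

/-- A channel: a unital, completely positive, normal (ultraweakly continuous, i.e. admitting
a predual on trace-class operators) linear map between operator algebras. -/
structure IsChannel (ψ : (HR →L[ℂ] HR) → (HR' →L[ℂ] HR')) : Prop where
  linear : IsLinearMap ℂ ψ
  unital : ψ 1 = 1
  completelyPositive : ∀ (n : ℕ) (a : Fin n → HR →L[ℂ] HR) (x : Fin n → HR'),
    0 ≤ (∑ i, ∑ j, (inner ℂ (x i) ((ψ ((adjoint (a i)) ∘L (a j))) (x j)) : ℂ)).re ∧
    (∑ i, ∑ j, (inner ℂ (x i) ((ψ ((adjoint (a i)) ∘L (a j))) (x j)) : ℂ)).im = 0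
  normal : ∀ ω : HR' →L[ℂ] HR', IsTraceClass ω → ∃ ω' : HR →L[ℂ] HR, IsTraceClass ω' ∧
    ∀ A : HR →L[ℂ] HR, trace (ω ∘L ψ A) = trace (ω' ∘L A)

/-- The trace norm, via duality: `‖T‖₁ = sup {|tr(T A)| : ‖A‖ ≤ 1}`. -/
def traceNorm (T : H →L[ℂ] H) : ℝ :=
  ⨆ A : {A : H →L[ℂ] H // ‖A‖ ≤ 1}, ‖trace (T ∘L A.1)‖

end QRF


open QRF

noncomputable section AuxQRF

namespace AuxQRF

open QRF

variable {H : Type*} [NormedAddCommGroup H] [InnerProductSpace ℂ H] [CompleteSpace H]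

local notation "⟪" x ", " y "⟫" => @inner ℂ _ _ x y

/-- Parseval identity for the chosen Hilbert basis. -/
lemma parseval_sq (x : H) :
    HasSum (fun i : hbIdx H => ‖(⟪hb H i, x⟫ : ℂ)‖ ^ 2) (‖x‖ ^ 2) := by
  have h0 := (hb H).hasSum_inner_mul_inner x x
  have h1 := h0.mapL Complex.reCLM
  have he : ∀ i : hbIdx H,
      Complex.reCLM (⟪x, hb H i⟫ * ⟪hb H i, x⟫) = ‖(⟪hb H i, x⟫ : ℂ)‖ ^ 2 := by
    intro i
    rw [← inner_conj_symm (hb H i) x, RCLike.mul_conj, RCLike.norm_conj]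
    simp only [Complex.reCLM_apply]
    norm_cast
  have he2 : Complex.reCLM (⟪x, x⟫ : ℂ) = ‖x‖ ^ 2 := by
    simpa using inner_self_eq_norm_sq (𝕜 := ℂ) x
  rw [← he2]
  exact HasSum.congr_fun h1 fun i => (he i).symm

/-- The workhorse: trace of `T T† B` computed by moving `T` to the vectors. -/
lemma trace_factor (T B : H →L[ℂ] H)
    (hT : Summable fun j : hbIdx H => ‖T (hb H j)‖ ^ 2) :
    trace (T ∘L adjoint T ∘L B) =
      ∑' j : hbIdx H, (⟪T (hb H j), B (T (hb H j))⟫ : ℂ) := by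
  set b : HilbertBasis (hbIdx H) ℂ H := hb H with hbdef
  set a : hbIdx H × hbIdx H → ℂ :=
    fun p => ⟪b p.1, T (b p.2)⟫ * ⟪T (b p.2), B (b p.1)⟫ with hadef
  -- column sums
  have hcol : ∀ j, HasSum (fun i => a (i, j)) (⟪T (b j), B (T (b j))⟫ : ℂ) := by
    intro j
    have h0 := b.hasSum_inner_mul_inner (T (b j)) ((adjoint B) (T (b j)))
    have h1 := h0.star
    have he : ∀ i, star ((⟪T (b j), b i⟫ : ℂ) * ⟪b i, (adjoint B) (T (b j))⟫) = a (i, j) := by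
      intro i
      rw [star_mul']
      rw [show star (⟪T (b j), b i⟫ : ℂ) = ⟪b i, T (b j)⟫ from inner_conj_symm _ _]
      rw [show star ((⟪b i, (adjoint B) (T (b j))⟫ : ℂ)) = ⟪(adjoint B) (T (b j)), b i⟫ from
        inner_conj_symm _ _]
      rw [adjoint_inner_left]
    have he2 : star ((⟪T (b j), (adjoint B) (T (b j))⟫ : ℂ)) = ⟪T (b j), B (T (b j))⟫ := by
      rw [show star ((⟪T (b j), (adjoint B) (T (b j))⟫ : ℂ))
          = ⟪(adjoint B) (T (b j)), T (b j)⟫ from inner_conj_symm _ _]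
      rw [adjoint_inner_left]
    rw [← he2]
    exact HasSum.congr_fun h1 fun i => (he i).symm
  -- row identification
  have hrow : ∀ i, (⟪b i, (T ∘L adjoint T ∘L B) (b i)⟫ : ℂ) = ∑' j, a (i, j) := by
    intro i
    have h0 := (b.tsum_inner_mul_inner ((adjoint T) (b i)) ((adjoint T) (B (b i)))).symm
    have hL : (⟪b i, (T ∘L adjoint T ∘L B) (b i)⟫ : ℂ)
        = ⟪(adjoint T) (b i), (adjoint T) (B (b i))⟫ := by
      simp only [ContinuousLinearMap.comp_apply]
      rw [← adjoint_inner_left]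
    rw [hL, h0]
    exact tsum_congr fun j => by rw [adjoint_inner_left, adjoint_inner_right]
  -- summability of the double family
  have hsummable : Summable a := by
    set g : hbIdx H × hbIdx H → ℝ := fun p =>
      (‖(⟪b p.1, T (b p.2)⟫ : ℂ)‖ ^ 2 + ‖(⟪b p.1, (adjoint B) (T (b p.2))⟫ : ℂ)‖ ^ 2) / 2
      with hgdef
    have hgsum : Summable g := by
      have hgnn : ∀ p : hbIdx H × hbIdx H, 0 ≤ g p := by
        intro p; simp only [hgdef]; positivity
      have hswap : Summable fun p : hbIdx H × hbIdx H => g (p.2, p.1) := by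
        rw [summable_prod_of_nonneg (Pi.le_def.mpr fun p => hgnn (p.2, p.1))]
        constructor
        · intro j
          exact (((parseval_sq (T (b j))).add
            (parseval_sq ((adjoint B) (T (b j))))).div_const 2).summable
        · have hval : ∀ j, (∑' i, g (i, j))
              = (‖T (b j)‖ ^ 2 + ‖(adjoint B) (T (b j))‖ ^ 2) / 2 := fun j =>
            (((parseval_sq (T (b j))).add
              (parseval_sq ((adjoint B) (T (b j))))).div_const 2).tsum_eq
          refine Summable.of_nonneg_of_le (fun j => ?_) (fun j => ?_)
            ((hT.mul_left ((1 + ‖adjoint B‖ ^ 2) / 2)))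
          · rw [hval]; positivity
          · rw [hval]
            have hBle : ‖(adjoint B) (T (b j))‖ ^ 2 ≤ ‖adjoint B‖ ^ 2 * ‖T (b j)‖ ^ 2 := by
              rw [← mul_pow]
              exact pow_le_pow_left₀ (norm_nonneg _) ((adjoint B).le_opNorm _) 2
            nlinarith [sq_nonneg ‖T (b j)‖]
      exact (Equiv.prodComm (hbIdx H) (hbIdx H)).summable_iff.mp
        (hswap.congr fun p => rfl)
    refine Summable.of_norm_bounded hgsum fun p => ?_
    have hB : ‖(⟪T (b p.2), B (b p.1)⟫ : ℂ)‖ = ‖(⟪b p.1, (adjoint B) (T (b p.2))⟫ : ℂ)‖ := by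
      rw [adjoint_inner_right, norm_inner_symm]
    rw [hadef]
    simp only [norm_mul]
    rw [hB, hgdef]
    set u := ‖(⟪b p.1, T (b p.2)⟫ : ℂ)‖
    set v := ‖(⟪b p.1, (adjoint B) (T (b p.2))⟫ : ℂ)‖
    nlinarith [sq_nonneg (u - v), norm_nonneg ((⟪b p.1, T (b p.2)⟫ : ℂ)),
      norm_nonneg ((⟪b p.1, (adjoint B) (T (b p.2))⟫ : ℂ))]
  -- put it together
  calc trace (T ∘L adjoint T ∘L B)
      = ∑' i, ∑' j, a (i, j) := tsum_congr hrow
    _ = ∑' j, ∑' i, a (i, j) := (Summable.tsum_comm (f := fun i j => a (i, j)) hsummable).symm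
    _ = ∑' j, (⟪T (b j), B (T (b j))⟫ : ℂ) := tsum_congr fun j => (hcol j).tsum_eq

/-- Conjugating the state is the same as conjugating the observable, inside the trace. -/
lemma trace_stateAct_comp {G : Type*} [Group G] [TopologicalSpace G]
    (U : G → H →L[ℂ] H) (hU : IsUnitaryRep U) (h : G)
    (ω : H →L[ℂ] H) (hω : IsPositiveTraceClass ω) (B : H →L[ℂ] H) :
    trace (stateAct U h ω ∘L B) = trace (ω ∘L (adjoint (U h) ∘L B ∘L U h)) := by
  obtain ⟨hU1, hUm, hUadj, -⟩ := hU
  obtain ⟨hpos, hsum⟩ := hω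
  have h0 : (0 : H →L[ℂ] H) ≤ ω := (ω.nonneg_iff_isPositive).mpr hpos
  set S : H →L[ℂ] H := CFC.sqrt ω with hSdef
  have hSpos : S.IsPositive := (S.nonneg_iff_isPositive).mp (CFC.sqrt_nonneg ω)
  have hSsa : adjoint S = S := by rw [← ContinuousLinearMap.star_eq_adjoint]; exact hSpos.isSelfAdjoint.star_eq
  have hSS : S ∘L S = ω := CFC.sqrt_mul_sqrt_self ω h0
  -- unitarity facts
  have hUid : ∀ x : H, adjoint (U h) (U h x) = x := by
    intro x
    rw [hUadj, ← ContinuousLinearMap.comp_apply, ← hUm, inv_mul_cancel, hU1,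
      ContinuousLinearMap.one_apply]
  have hUinner : ∀ x y : H, (⟪U h x, U h y⟫ : ℂ) = ⟪x, y⟫ := by
    intro x y
    rw [← adjoint_inner_right, hUid]
  have hUnorm : ∀ x : H, ‖U h x‖ ^ 2 = ‖x‖ ^ 2 := by
    intro x
    rw [← inner_self_eq_norm_sq (𝕜 := ℂ) (U h x), ← inner_self_eq_norm_sq (𝕜 := ℂ) x,
      hUinner]
  -- diagonal of ω along the basis
  have hdiag : ∀ j : hbIdx H, (⟪hb H j, ω (hb H j)⟫ : ℂ).re = ‖S (hb H j)‖ ^ 2 := by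
    intro j
    rw [← hSS, ContinuousLinearMap.comp_apply, ← adjoint_inner_left, hSsa]
    simpa using inner_self_eq_norm_sq (𝕜 := ℂ) (S (hb H j))
  have hSsum : Summable fun j : hbIdx H => ‖S (hb H j)‖ ^ 2 :=
    hsum.congr fun j => hdiag j
  -- factorizations
  have hfac1 : ω = S ∘L adjoint S := by rw [hSsa, hSS]
  have hfac2 : stateAct U h ω = (U h ∘L S) ∘L adjoint (U h ∘L S) := by
    rw [ContinuousLinearMap.adjoint_comp, hSsa]
    rw [stateAct, ← hSS]
    ext x
    simp [ContinuousLinearMap.comp_apply]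
  have hsum2 : Summable fun j : hbIdx H => ‖(U h ∘L S) (hb H j)‖ ^ 2 := by
    refine hSsum.congr fun j => ?_
    rw [ContinuousLinearMap.comp_apply, hUnorm]
  calc trace (stateAct U h ω ∘L B)
      = ∑' j : hbIdx H, (⟪(U h ∘L S) (hb H j), B ((U h ∘L S) (hb H j))⟫ : ℂ) := by
        rw [hfac2, ContinuousLinearMap.comp_assoc]
        exact trace_factor (U h ∘L S) B hsum2
    _ = ∑' j : hbIdx H,
        (⟪S (hb H j), (adjoint (U h) ∘L B ∘L U h) (S (hb H j))⟫ : ℂ) := by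
        refine tsum_congr fun j => ?_
        simp only [ContinuousLinearMap.comp_apply]
        rw [← adjoint_inner_right]
    _ = trace (ω ∘L (adjoint (U h) ∘L B ∘L U h)) := by
        rw [hfac1, ContinuousLinearMap.comp_assoc]
        exact (trace_factor S (adjoint (U h) ∘L B ∘L U h) hSsum).symm

/-- Specification of the Born measure when the defining existential holds. -/
lemma bornMeasure_spec {Ω : Type*} [MeasurableSpace Ω] {E : Set Ω → (H →L[ℂ] H)}
    {ω : H →L[ℂ] H}
    (hex : ∃ μ : MeasureTheory.Measure Ω, MeasureTheory.IsProbabilityMeasure μ ∧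
      ∀ X : Set Ω, MeasurableSet X → (μ X).toReal = (trace (ω ∘L E X)).re) :
    MeasureTheory.IsProbabilityMeasure (bornMeasure E ω) ∧
      ∀ X : Set Ω, MeasurableSet X →
        ((bornMeasure E ω) X).toReal = (trace (ω ∘L E X)).re := by
  rw [bornMeasure, dif_pos hex]
  exact hex.choose_spec

end AuxQRF

open AuxQRF

/-- Invariance of the relative-state assignment on diagonal orbits: `(h.ρ)^(h.ω) = ρ^(ω)`. -/
theorem statement10 {G HS HR : Type*}
    [Group G] [TopologicalSpace G] [IsTopologicalGroup G]
    [LocallyCompactSpace G] [SecondCountableTopology G] [T2Space G]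
    [MeasurableSpace G] [BorelSpace G]
    [NormedAddCommGroup HS] [InnerProductSpace ℂ HS] [CompleteSpace HS]
    [NormedAddCommGroup HR] [InnerProductSpace ℂ HR] [CompleteSpace HR]
    (US : G → HS →L[ℂ] HS) (hUS : IsUnitaryRep US)
    (UR : G → HR →L[ℂ] HR) (hUR : IsUnitaryRep UR)
    (E : Set G → (HR →L[ℂ] HR)) (hE : IsPOVM E) (hcov : RightCovariant UR E)
    (ρ : HS →L[ℂ] HS) (hρ : IsState ρ) (ω : HR →L[ℂ] HR) (hω : IsState ω) (h : G) :
    ∫ g, stateAct US g (stateAct US h ρ) ∂(bornMeasure E (stateAct UR h ω)) =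
      ∫ g, stateAct US g ρ ∂(bornMeasure E ω) := by
  classical
  obtain ⟨hprob, hprop⟩ := bornMeasure_spec (hE.2.2 ω hω)
  set μ := bornMeasure E ω with hμdef
  set e : G ≃ᵐ G := MeasurableEquiv.mulRight h⁻¹ with hedef
  have hecoe : ∀ g : G, e g = g * h⁻¹ := fun g => rfl
  have hpre : ∀ X : Set G, e ⁻¹' X = (fun x => x * h) '' X := by
    intro X
    ext g
    constructor
    · intro hg
      exact ⟨g * h⁻¹, hg, by group⟩
    · rintro ⟨x, hx, rfl⟩
      show (x * h) * h⁻¹ ∈ X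
      simpa [mul_inv_cancel_right] using hx
  have hmeas : ∀ X : Set G, MeasurableSet X → MeasurableSet ((fun x => x * h) '' X) := by
    intro X hX
    rw [← hpre X]
    exact e.measurable hX
  have htr : ∀ X : Set G, MeasurableSet X →
      trace (stateAct UR h ω ∘L E X) = trace (ω ∘L E ((fun x => x * h) '' X)) := by
    intro X hX
    rw [hcov X hX h]
    exact trace_stateAct_comp UR hUR h ω hω.1 (E X)
  haveI : MeasureTheory.IsProbabilityMeasure (μ.map e) :=
    MeasureTheory.Measure.isProbabilityMeasure_map e.measurable.aemeasurable
  have hprop' : ∀ X : Set G, MeasurableSet X →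
      ((μ.map e) X).toReal = (trace (stateAct UR h ω ∘L E X)).re := by
    intro X hX
    rw [e.map_apply, hpre X, hprop _ (hmeas X hX), htr X hX]
  obtain ⟨hprob1, hprop1⟩ := bornMeasure_spec (H := HR) (E := E) (ω := stateAct UR h ω)
    ⟨μ.map e, this, hprop'⟩
  have hμeq : bornMeasure E (stateAct UR h ω) = μ.map e := by
    ext X hX
    exact (ENNReal.toReal_eq_toReal_iff' (MeasureTheory.measure_ne_top _ _)
      (MeasureTheory.measure_ne_top _ _)).mp ((hprop1 X hX).trans (hprop' X hX).symm)
  rw [hμeq, MeasureTheory.integral_map_equiv]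
  refine integral_congr_ae (Filter.Eventually.of_forall fun g => ?_)
  show stateAct US (g * h⁻¹) (stateAct US h ρ) = stateAct US g ρ
  obtain ⟨hU1, hUm, hUadj, -⟩ := hUS
  ext x
  simp only [stateAct, ContinuousLinearMap.comp_apply, hUadj]
  have k : ∀ (a b : G) (y : HS), US a (US b y) = US (a * b) y := by
    intro a b y
    rw [hUm, ContinuousLinearMap.comp_apply]
  rw [k, k, show (g * h⁻¹) * h = g by group, show h⁻¹ * (g * h⁻¹)⁻¹ = g⁻¹ by group]
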